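/- Let A be an abelian group and θ an endomorphism of A such that colim(A →θ A →θ ⋯) is a ℤ[1/ℓ]-module (i.e. ℓ acts invertibly on the colimit) and the induced map θ[1/ℓ] on A[1/ℓ] is an automorphism. Then colim_θ A ≅ A[1/ℓ] compatibly with the canonical maps from A. -/

import Mathlib

open TensorProduct

noncomputable section

/-- `ℤ[1/ℓ]`. -/
abbrev Zloc (ℓ : ℤ) : Type := Localization.Away ℓ

/-- `A[1/ℓ] = ℤ[1/ℓ] ⊗_ℤ A`. -/
abbrev loc (ℓ : ℤ) (A : Type) [AddCommGroup A] : Type := Zloc ℓ ⊗[ℤ] A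

/-- The map `A → A[1/ℓ]`, `a ↦ 1 ⊗ a`. -/
def toLoc (ℓ : ℤ) (A : Type) [AddCommGroup A] : A →+ loc ℓ A :=
  ((TensorProduct.mk ℤ (Zloc ℓ) A) 1).toAddMonoidHom

/-- The induced endomorphism `θ[1/ℓ]` of `A[1/ℓ]`. -/
def locMap (ℓ : ℤ) {A : Type} [AddCommGroup A] (θ : A →+ A) : loc ℓ A →+ loc ℓ A :=
  (LinearMap.lTensor (Zloc ℓ) θ.toIntLinearMap).toAddMonoidHom

/-- The sequential colimit of `A → A → A → ⋯` along `θ`. -/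
abbrev seqColim {A : Type} [AddCommGroup A] (θ : A →+ A) : Type :=
  AddCommGroup.DirectLimit (fun _ : ℕ => A)
    (fun i j _ => @id (A →+ A) ((show AddMonoid.End A from θ) ^ (j - i)))

/-- The canonical map `A → colim_θ A` (at stage 0). -/
def seqColimOf {A : Type} [AddCommGroup A] (θ : A →+ A) : A →+ seqColim θ :=
  AddCommGroup.DirectLimit.of (fun _ : ℕ => A)
    (fun i j _ => @id (A →+ A) ((show AddMonoid.End A from θ) ^ (j - i))) 0

/-! With `u = θ[1/ℓ]`, the maps `u⁻ⁿ ∘ (A → A[1/ℓ])` are compatible along `θ`, so they induce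
`F : colim_θ A → A[1/ℓ]` under `A`. An element of the kernel of `F` comes from some stage `a` with
`ℓᵏ a = 0`, so it vanishes because `ℓ` acts injectively on the colimit. Since the colimit is
`ℓ`-local, the universal property of the localization `A → A[1/ℓ]` provides a section of `F`. -/

open Function

section SeqColim

variable {A : Type} {B : Type*} [AddCommGroup A] [AddCommGroup B] (θ : A →+ A)

def seqColimLift (f : A →+ B) (u : B ≃+ B) (hfu : Semiconj f θ u) : seqColim θ →+ B :=
  AddCommGroup.DirectLimit.lift _ _ _
    (fun n => ((show AddMonoid.End B from u.symm.toAddMonoidHom) ^ n).comp f) <| by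
      intro i j hij a
      obtain ⟨m, rfl⟩ := Nat.exists_eq_add_of_le hij
      change u.symm^[i + m] (f (θ^[i + m - i] a)) = u.symm^[i] (f a)
      rw [add_tsub_cancel_left, iterate_add_apply, (hfu.iterate_right m).eq,
        (LeftInverse.iterate u.symm_apply_apply m).eq]

variable {θ} {f : A →+ B} {u : B ≃+ B} (hfu : Semiconj f θ u)

lemma seqColimLift_of (n : ℕ) (a : A) :
    seqColimLift θ f u hfu (AddCommGroup.DirectLimit.of _ _ n a) = u.symm^[n] (f a) :=
  AddCommGroup.DirectLimit.lift_of (G := fun _ : ℕ => A) _ _ _ n a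

lemma seqColimLift_seqColimOf (a : A) : seqColimLift θ f u hfu (seqColimOf θ a) = f a :=
  seqColimLift_of hfu 0 a

lemma seqColimLift_injective (S : Submonoid ℤ) (hker : ∀ a, f a = 0 → ∃ s : S, s • a = 0)
    (hS : ∀ s : S, Injective fun c : seqColim θ => (s : ℤ) • c) :
    Injective (seqColimLift θ f u hfu) := by
  refine (injective_iff_map_eq_zero _).mpr fun c hc => ?_
  induction c using AddCommGroup.DirectLimit.induction_on with
  | ih n a =>
    have hfa : f a = 0 := (u.symm.injective.iterate n) <| by
      rw [← seqColimLift_of hfu, hc, iterate_map_zero]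
    obtain ⟨s, hs⟩ := hker a hfa
    refine hS s ?_
    change (s : ℤ) • _ = (s : ℤ) • 0
    rw [smul_zero, ← map_zsmul, ← Submonoid.smul_def, hs, map_zero]

end SeqColim

theorem IsLocalizedModule.surjective_of_comp_eq {R M N P : Type*} [CommSemiring R]
    [AddCommMonoid M] [AddCommMonoid N] [AddCommMonoid P] [Module R M] [Module R N] [Module R P]
    (S : Submonoid R) (f : M →ₗ[R] N) [IsLocalizedModule S f] (g : M →ₗ[R] P)
    (hP : ∀ s : S, IsUnit (algebraMap R (Module.End R P) s)) (F : P →ₗ[R] N) (hF : F ∘ₗ g = f) :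
    Surjective F := by
  have hsection : F ∘ₗ IsLocalizedModule.lift S f g hP = LinearMap.id :=
    IsLocalizedModule.ext S f (IsLocalizedModule.map_units f) <| by
      rw [LinearMap.comp_assoc, IsLocalizedModule.lift_comp, hF, LinearMap.id_comp]
  exact fun y => ⟨_, LinearMap.congr_fun hsection y⟩

lemma isUnit_algebraMap_of_bijective_smul {M : Type*} [AddCommGroup M] {ℓ : ℤ}
    (hℓ : Bijective fun m : M => ℓ • m) (s : Submonoid.powers ℓ) :
    IsUnit (algebraMap ℤ (Module.End ℤ M) s) := by
  obtain ⟨_, k, rfl⟩ := s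
  rw [Module.End.isUnit_iff]
  convert hℓ.iterate k
  ext m
  simp only [Module.algebraMap_end_apply, smul_iterate]

section Localization

variable (ℓ : ℤ) {A : Type} [AddCommGroup A]

instance isLocalizedModule_toLoc :
    IsLocalizedModule (Submonoid.powers ℓ) (toLoc ℓ A).toIntLinearMap :=
  -- `loc` carries the `ℤ`-module structure of `Zloc ℓ` coming from its additive group, Mathlib's
  -- lemma the one coming from `Algebra ℤ (Zloc ℓ)`; the two agree because `ℤ`-module structures
  -- are unique.
  have key : ∀ inst : Module ℤ (Zloc ℓ),
      letI := inst; IsLocalizedModule (Submonoid.powers ℓ) (TensorProduct.mk ℤ (Zloc ℓ) A 1) := by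
    intro inst
    obtain rfl := Subsingleton.elim inst Algebra.toModule
    exact IsLocalization.tensorProduct_isLocalizedModule _ _
  key _

lemma semiconj_toLoc_locMap (θ : A →+ A) : Semiconj (toLoc ℓ A) θ (locMap ℓ θ) := fun a => by
  simp [locMap, toLoc]

end Localization

theorem colim_eq_loc_of_ell_invertible_general {A : Type} [AddCommGroup A] (ℓ : ℤ)
    (θ : A →+ A)
    (hcolim : Function.Bijective (fun c : seqColim θ => ℓ • c))
    (ha : Function.Bijective (locMap ℓ θ)) :
    ∃ e : seqColim θ ≃+ loc ℓ A, ∀ a : A, e (seqColimOf θ a) = toLoc ℓ A a := by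
  let u := AddEquiv.ofBijective (locMap ℓ θ) ha
  have hsemi : Semiconj (toLoc ℓ A) θ u := semiconj_toLoc_locMap ℓ θ
  have hunits := isUnit_algebraMap_of_bijective_smul hcolim
  let F := seqColimLift θ (toLoc ℓ A) u hsemi
  have hinj : Injective F := seqColimLift_injective hsemi (.powers ℓ)
    (fun _ => (IsLocalizedModule.eq_zero_iff _ (toLoc ℓ A).toIntLinearMap).mp)
    (fun s => ((Module.End.isUnit_iff _).mp (hunits s)).injective)
  have hsurj : Surjective F :=
    IsLocalizedModule.surjective_of_comp_eq (.powers ℓ) (toLoc ℓ A).toIntLinearMap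
      (seqColimOf θ).toIntLinearMap hunits F.toIntLinearMap (LinearMap.ext fun a => seqColimLift_seqColimOf hsemi a)
  exact ⟨.ofBijective F ⟨hinj, hsurj⟩, seqColimLift_seqColimOf hsemi⟩

/-- If the colimit of `A` along `θ` is a `ℤ[1/ℓ]`-module (`ℓ` acts invertibly on it)
and `θ[1/ℓ]` is an automorphism of `A[1/ℓ]`, then `colim_θ A ≅ A[1/ℓ]` under `A`. -/
theorem colim_eq_loc_of_ell_invertible {A : Type} [AddCommGroup A] (ℓ : ℤ) (hℓ : 0 < ℓ)
    (θ : A →+ A)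
    (hcolim : Function.Bijective (fun c : seqColim θ => ℓ • c))
    (ha : Function.Bijective (locMap ℓ θ)) :
    ∃ e : seqColim θ ≃+ loc ℓ A, ∀ a : A, e (seqColimOf θ a) = toLoc ℓ A a :=
  colim_eq_loc_of_ell_invertible_general ℓ θ hcolim ha
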